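/- Let A = {P^A_i} and B = {P^B_j} be projective observables on ℂ^d. Then for every density matrix ρ, the classical fidelity satisfies Σ_j √(q^{A→B}_ρ(j) · p^B_ρ(j)) ≥ F(E^A(ρ), ρ), and consequently Q_F(A→B) ≤ D_F^max(A) = 1 − (inf over density matrices ρ of F(E^A(ρ), ρ))². -/

import Mathlib

open scoped BigOperators ComplexOrder
open Matrix

noncomputable section

/-- A projective observable: a finite family of mutually orthogonal
self-adjoint idempotents summing to the identity. -/
def IsProjObs {d r : ℕ} (P : Fin r → Matrix (Fin d) (Fin d) ℂ) : Prop :=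
  (∀ i, (P i).IsHermitian) ∧ (∀ i, P i * P i = P i) ∧
    (∀ i k, i ≠ k → P i * P k = 0) ∧ (∑ i, P i = 1)

/-- A density matrix: positive semidefinite with unit trace. -/
def IsDensity {d : ℕ} (ρ : Matrix (Fin d) (Fin d) ℂ) : Prop :=
  ρ.PosSemidef ∧ ρ.trace = 1

/-- The measurement channel `E^A(ρ) = Σ_i P_i ρ P_i` of a projective observable. -/
def measChannel {d r : ℕ} (P : Fin r → Matrix (Fin d) (Fin d) ℂ)
    (ρ : Matrix (Fin d) (Fin d) ℂ) : Matrix (Fin d) (Fin d) ℂ :=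
  ∑ i, P i * ρ * P i

/-- `p^B_ρ(j) = tr(P^B_j ρ)`. -/
def probB {d rB : ℕ} (Q : Fin rB → Matrix (Fin d) (Fin d) ℂ)
    (ρ : Matrix (Fin d) (Fin d) ℂ) (j : Fin rB) : ℝ :=
  ((Q j * ρ).trace).re

/-- `q^{A→B}_ρ(j) = tr(P^B_j Σ_i P^A_i ρ P^A_i)`. -/
def probAB {d rA rB : ℕ} (P : Fin rA → Matrix (Fin d) (Fin d) ℂ)
    (Q : Fin rB → Matrix (Fin d) (Fin d) ℂ)
    (ρ : Matrix (Fin d) (Fin d) ℂ) (j : Fin rB) : ℝ :=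
  ((Q j * measChannel P ρ).trace).re

open Classical in
/-- The positive semidefinite square root of a PSD matrix (junk value `0` otherwise). -/
noncomputable def msqrt {d : ℕ} (A : Matrix (Fin d) (Fin d) ℂ) :
    Matrix (Fin d) (Fin d) ℂ :=
  if h : A.PosSemidef then
    (h.1.eigenvectorUnitary : Matrix (Fin d) (Fin d) ℂ) *
      diagonal ((↑) ∘ Real.sqrt ∘ h.1.eigenvalues) *
      (star (h.1.eigenvectorUnitary : Matrix (Fin d) (Fin d) ℂ))
  else 0

/-- `|X| = √(Xᴴ X)`, the positive semidefinite absolute value of a matrix. -/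
noncomputable def matAbs {d : ℕ} (X : Matrix (Fin d) (Fin d) ℂ) :
    Matrix (Fin d) (Fin d) ℂ :=
  msqrt (Xᴴ * X)

/-- The quantum fidelity `F(ρ,σ) = tr √(√ρ σ √ρ)`. -/
noncomputable def qFid {d : ℕ} (ρ σ : Matrix (Fin d) (Fin d) ℂ) : ℝ :=
  ((msqrt (msqrt ρ * σ * msqrt ρ)).trace).re

/-- Variational distance `D_1(p,q) = (1/2) Σ_j |p_j − q_j|`. -/
def distL1 {rB : ℕ} (p q : Fin rB → ℝ) : ℝ := (1 / 2) * ∑ j, |p j - q j|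

/-- Chebyshev distance `D_∞(p,q) = max_j |p_j − q_j|`. -/
noncomputable def distLinf {rB : ℕ} (p q : Fin rB → ℝ) : ℝ := ⨆ j, |p j - q j|

/-- Classical fidelity `F(p,q) = Σ_j √(p_j q_j)`. -/
noncomputable def classFid {rB : ℕ} (p q : Fin rB → ℝ) : ℝ :=
  ∑ j, Real.sqrt (p j * q j)

/-- `Q_1(A→B)`. -/
noncomputable def Q1 {d rA rB : ℕ} (P : Fin rA → Matrix (Fin d) (Fin d) ℂ)
    (Q : Fin rB → Matrix (Fin d) (Fin d) ℂ) : ℝ :=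
  sSup {x : ℝ | ∃ ρ, IsDensity ρ ∧ x = distL1 (probAB P Q ρ) (probB Q ρ)}

/-- `Q_∞(A→B)`. -/
noncomputable def Qinf {d rA rB : ℕ} (P : Fin rA → Matrix (Fin d) (Fin d) ℂ)
    (Q : Fin rB → Matrix (Fin d) (Fin d) ℂ) : ℝ :=
  sSup {x : ℝ | ∃ ρ, IsDensity ρ ∧ x = distLinf (probAB P Q ρ) (probB Q ρ)}

/-- `Q_F(A→B)`. -/
noncomputable def QF {d rA rB : ℕ} (P : Fin rA → Matrix (Fin d) (Fin d) ℂ)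
    (Q : Fin rB → Matrix (Fin d) (Fin d) ℂ) : ℝ :=
  sSup {x : ℝ | ∃ ρ, IsDensity ρ ∧
    x = 1 - (classFid (probAB P Q ρ) (probB Q ρ)) ^ 2}

/-- The rank-one projection `|v⟩⟨v|` onto a (unit) vector `v`. -/
def proj {d : ℕ} (v : Fin d → ℂ) : Matrix (Fin d) (Fin d) ℂ :=
  Matrix.vecMulVec v (star v)

/-!
Put `σ = E^A(ρ)`, `R = √ρ`, `S = √σ`. Then `F(σ, ρ) = tr |R S|`, and polar decomposition gives a
contraction `W` with `tr |R S| = tr (Wᴴ R S) = tr (R S Wᴴ)`. Inserting `Σ_j Q_j = 1` and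
`Q_j = Q_j²` splits this trace into the Hilbert–Schmidt products `⟪W S Q_j, R Q_j⟫`, and
Cauchy–Schwarz bounds each one by `‖S Q_j‖₂ ‖R Q_j‖₂ = √(q_j p_j)`. The bound on `Q_F` follows
because `t ↦ 1 - t²` is decreasing on `t ≥ 0`.
-/
open scoped MatrixOrder

namespace Matrix

open RCLike

variable {n 𝕜 : Type*} [Fintype n] [RCLike 𝕜]

lemma re_trace_conjTranspose_mul_le (A B : Matrix n n 𝕜) :
    re (Aᴴ * B).trace ≤ √(re (Aᴴ * A).trace) * √(re (Bᴴ * B).trace) := by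
  classical
  let := toMatrixSeminormedAddCommGroup (1 : Matrix n n 𝕜) .one
  let := toMatrixInnerProductSpace (1 : Matrix n n 𝕜) .one
  have h := re_inner_le_norm (𝕜 := 𝕜) Bᴴ Aᴴ
  rw [norm_eq_sqrt_re_inner (𝕜 := 𝕜), norm_eq_sqrt_re_inner (𝕜 := 𝕜)] at h
  -- the inner product induced by `M = 1` is `⟪x, y⟫ = tr (y * 1 * xᴴ)`
  change re (Aᴴ * 1 * Bᴴᴴ).trace ≤
    √(re (Bᴴ * 1 * Bᴴᴴ).trace) * √(re (Aᴴ * 1 * Aᴴᴴ).trace) at h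
  rw [mul_comm (√_)] at h
  simpa [trace_mul_comm B] using h

lemma re_trace_mono {A B : Matrix n n 𝕜} (h : A ≤ B) : re A.trace ≤ re B.trace := by
  have := (le_iff.mp h).trace_nonneg
  rw [trace_sub, sub_nonneg] at this
  exact (RCLike.le_iff_re_im.mp this).1

lemma re_trace_conjTranspose_mul_self_nonneg (A : Matrix n n 𝕜) : 0 ≤ re (Aᴴ * A).trace := by
  simpa using re_trace_mono (nonneg_iff_posSemidef.mpr (posSemidef_conjTranspose_mul_self A))

variable [DecidableEq n]

lemma re_trace_conjTranspose_mul_self_mul_le {W : Matrix n n 𝕜} (hW : Wᴴ * W ≤ 1)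
    (A : Matrix n n 𝕜) : re ((W * A)ᴴ * (W * A)).trace ≤ re (Aᴴ * A).trace := by
  apply re_trace_mono
  simpa [conjTranspose_mul, ← Matrix.mul_assoc, star_eq_conjTranspose] using
    star_left_conjugate_le_conjugate hW A

/-- Polar decomposition: `W = X |X|⁺` with the pseudoinverse `|X|⁺ = cfc (·⁻¹) |X|`, which
works on the kernel of `|X|` because `0⁻¹ = 0`. -/
lemma exists_conjTranspose_mul_eq_abs (X : Matrix n n 𝕜) :
    ∃ W : Matrix n n 𝕜, Wᴴ * X = CFC.abs X ∧ Wᴴ * W ≤ 1 := by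
  set N := CFC.abs X
  have hcont (f : ℝ → ℝ) : ContinuousOn f (spectrum ℝ N) := (Set.toFinite _).continuousOn f
  set T := cfc (fun x : ℝ => x⁻¹) N
  have hNN : cfc (fun x : ℝ => x * x) N = Xᴴ * X := by
    rw [cfc_mul _ _ N (hcont _) (hcont _), cfc_id' ℝ N]
    exact CFC.abs_mul_abs X
  have hT : Tᴴ = T := (cfc_predicate _ N : IsSelfAdjoint T).star_eq
  refine ⟨X * T, ?_, ?_⟩
  · calc (X * T)ᴴ * X = T * cfc (fun x : ℝ => x * x) N := by
          rw [conjTranspose_mul, hT, hNN, Matrix.mul_assoc]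
      _ = cfc (fun x : ℝ => x⁻¹ * (x * x)) N := (cfc_mul _ _ N (hcont _) (hcont _)).symm
      _ = N := by
          rw [cfc_congr fun x _ => (by rw [← mul_assoc, inv_mul_mul_self] : x⁻¹ * (x * x) = x)]
          exact cfc_id' ℝ N
  · calc (X * T)ᴴ * (X * T) = T * cfc (fun x : ℝ => x * x) N * T := by
          rw [conjTranspose_mul, hT, hNN, Matrix.mul_assoc, Matrix.mul_assoc, Matrix.mul_assoc]
      _ = cfc (fun x : ℝ => x⁻¹ * (x * x) * x⁻¹) N := by
          rw [cfc_mul (fun x : ℝ => x⁻¹ * (x * x)) _ N (hcont _) (hcont _),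
            cfc_mul (fun x : ℝ => x⁻¹) _ N (hcont _) (hcont _)]
      _ ≤ 1 := cfc_le_one _ N fun x _ => by
          rcases eq_or_ne x 0 with rfl | hx
          · simp
          · simp [hx]

end Matrix

section

variable {d rA rB : ℕ}

lemma msqrt_eq_sqrt {A : Matrix (Fin d) (Fin d) ℂ} (hA : A.PosSemidef) :
    msqrt A = CFC.sqrt A := by
  rw [msqrt, dif_pos hA, CFC.sqrt_eq_real_sqrt A hA.nonneg, cfcₙ_eq_cfc, hA.1.cfc_eq,
    IsHermitian.cfc, Unitary.conjStarAlgAut_apply]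
  rfl

lemma posSemidef_msqrt (A : Matrix (Fin d) (Fin d) ℂ) : (msqrt A).PosSemidef := by
  by_cases hA : A.PosSemidef
  · rw [msqrt_eq_sqrt hA, ← nonneg_iff_posSemidef]
    exact CFC.sqrt_nonneg A
  · rw [msqrt, dif_neg hA]
    exact .zero

lemma msqrt_mul_self {A : Matrix (Fin d) (Fin d) ℂ} (hA : A.PosSemidef) :
    msqrt A * msqrt A = A := by
  rw [msqrt_eq_sqrt hA]
  exact CFC.sqrt_mul_sqrt_self A hA.nonneg

lemma matAbs_eq_abs (X : Matrix (Fin d) (Fin d) ℂ) : matAbs X = CFC.abs X :=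
  msqrt_eq_sqrt (posSemidef_conjTranspose_mul_self X)

lemma qFid_nonneg (ρ σ : Matrix (Fin d) (Fin d) ℂ) : 0 ≤ qFid ρ σ :=
  (Complex.nonneg_iff.mp (posSemidef_msqrt _).trace_nonneg).1

lemma qFid_eq_re_trace_matAbs {ρ σ : Matrix (Fin d) (Fin d) ℂ} (hρ : ρ.PosSemidef) :
    qFid σ ρ = (matAbs (msqrt ρ * msqrt σ)).trace.re := by
  have hR := (posSemidef_msqrt ρ).1
  have hS := (posSemidef_msqrt σ).1
  rw [qFid, matAbs, conjTranspose_mul, hR.eq, hS.eq]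
  conv_lhs => rw [← msqrt_mul_self hρ]
  simp only [Matrix.mul_assoc]

lemma trace_mul_eq_sum_trace {Q : Fin rB → Matrix (Fin d) (Fin d) ℂ} (hQ : IsProjObs Q)
    (A B : Matrix (Fin d) (Fin d) ℂ) :
    (A * B).trace = ∑ j, ((Bᴴ * Q j)ᴴ * (A * Q j)).trace := by
  calc (A * B).trace = (A * (∑ j, Q j) * B).trace := by rw [hQ.2.2.2, Matrix.mul_one]
    _ = ∑ j, (A * (Q j * Q j) * B).trace := by
        simp only [hQ.2.1, Matrix.mul_sum, Matrix.sum_mul, trace_sum]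
    _ = ∑ j, ((Bᴴ * Q j)ᴴ * (A * Q j)).trace := by
        refine Finset.sum_congr rfl fun j _ => ?_
        rw [conjTranspose_mul, conjTranspose_conjTranspose, (hQ.1 j).eq,
          trace_mul_comm (Q j * B)]
        simp only [Matrix.mul_assoc]

lemma probB_eq_re_trace_msqrt {Q : Fin rB → Matrix (Fin d) (Fin d) ℂ} (hQ : IsProjObs Q)
    {ρ : Matrix (Fin d) (Fin d) ℂ} (hρ : ρ.PosSemidef) (j : Fin rB) :
    probB Q ρ j = ((msqrt ρ * Q j)ᴴ * (msqrt ρ * Q j)).trace.re := by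
  rw [probB, conjTranspose_mul, (posSemidef_msqrt ρ).1.eq, (hQ.1 j).eq, ← Matrix.mul_assoc,
    Matrix.mul_assoc (Q j), msqrt_mul_self hρ, trace_mul_comm (Q j * ρ), ← Matrix.mul_assoc,
    hQ.2.1]

lemma probB_nonneg {Q : Fin rB → Matrix (Fin d) (Fin d) ℂ} (hQ : IsProjObs Q)
    {ρ : Matrix (Fin d) (Fin d) ℂ} (hρ : ρ.PosSemidef) (j : Fin rB) : 0 ≤ probB Q ρ j := by
  rw [probB_eq_re_trace_msqrt hQ hρ]
  exact re_trace_conjTranspose_mul_self_nonneg (msqrt ρ * Q j)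

theorem qFid_le_classFid_probB {Q : Fin rB → Matrix (Fin d) (Fin d) ℂ} (hQ : IsProjObs Q)
    {σ ρ : Matrix (Fin d) (Fin d) ℂ} (hσ : σ.PosSemidef) (hρ : ρ.PosSemidef) :
    qFid σ ρ ≤ classFid (probB Q σ) (probB Q ρ) := by
  set R := msqrt ρ
  set S := msqrt σ
  have hS : Sᴴ = S := (posSemidef_msqrt σ).1.eq
  obtain ⟨W, hWX, hW⟩ := exists_conjTranspose_mul_eq_abs (R * S)
  calc qFid σ ρ = (R * (S * Wᴴ)).trace.re := by
        rw [qFid_eq_re_trace_matAbs hρ, matAbs_eq_abs, ← hWX, trace_mul_comm, Matrix.mul_assoc]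
    _ = ∑ j, ((W * (S * Q j))ᴴ * (R * Q j)).trace.re := by
        rw [trace_mul_eq_sum_trace hQ, Complex.re_sum]
        simp only [conjTranspose_mul, conjTranspose_conjTranspose, hS, (hQ.1 _).eq,
          Matrix.mul_assoc]
    _ ≤ ∑ j, √((W * (S * Q j))ᴴ * (W * (S * Q j))).trace.re *
          √((R * Q j)ᴴ * (R * Q j)).trace.re :=
        Finset.sum_le_sum fun j _ => re_trace_conjTranspose_mul_le (W * (S * Q j)) (R * Q j)
    _ ≤ ∑ j, √(probB Q σ j) * √(probB Q ρ j) := by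
        gcongr with j
        · rw [probB_eq_re_trace_msqrt hQ hσ]
          exact re_trace_conjTranspose_mul_self_mul_le hW _
        · rw [probB_eq_re_trace_msqrt hQ hρ]
    _ = classFid (probB Q σ) (probB Q ρ) := by
        simp only [classFid, Real.sqrt_mul (probB_nonneg hQ hσ _)]

lemma measChannel_posSemidef {P : Fin rA → Matrix (Fin d) (Fin d) ℂ}
    (hP : ∀ i, (P i).IsHermitian) {ρ : Matrix (Fin d) (Fin d) ℂ} (hρ : ρ.PosSemidef) :
    (measChannel P ρ).PosSemidef :=
  posSemidef_sum _ fun i _ => by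
    simpa only [(hP i).eq] using hρ.mul_mul_conjTranspose_same (P i)

lemma exists_isDensity (hd : 0 < d) : ∃ ρ : Matrix (Fin d) (Fin d) ℂ, IsDensity ρ :=
  ⟨diagonal (Pi.single ⟨0, hd⟩ 1),
    posSemidef_diagonal_iff.mpr fun i => by by_cases h : i = ⟨0, hd⟩ <;> simp [h],
    by simp [trace_diagonal]⟩

lemma sSup_one_sub_sq_le_one_sub_sInf_sq {α : Type*} {p : α → Prop} (hp : ∃ a, p a)
    {f g : α → ℝ} (hg : ∀ a, 0 ≤ g a) (hgf : ∀ a, p a → g a ≤ f a) :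
    sSup {x : ℝ | ∃ a, p a ∧ x = 1 - f a ^ 2} ≤
      1 - sInf {x : ℝ | ∃ a, p a ∧ x = g a} ^ 2 := by
  obtain ⟨a₀, ha₀⟩ := hp
  refine csSup_le ⟨_, a₀, ha₀, rfl⟩ ?_
  rintro _ ⟨a, ha, rfl⟩
  have hinf : sInf {x : ℝ | ∃ a, p a ∧ x = g a} ≤ g a :=
    csInf_le ⟨0, by rintro _ ⟨b, -, rfl⟩; exact hg b⟩ ⟨a, ha, rfl⟩
  have hinf_nonneg : 0 ≤ sInf {x : ℝ | ∃ a, p a ∧ x = g a} :=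
    Real.sInf_nonneg (by rintro _ ⟨b, -, rfl⟩; exact hg b)
  nlinarith [hgf a ha]

end

theorem stmt_6 {d rA rB : ℕ} (hd : 0 < d)
    (P : Fin rA → Matrix (Fin d) (Fin d) ℂ) (Q : Fin rB → Matrix (Fin d) (Fin d) ℂ)
    (hP : IsProjObs P) (hQ : IsProjObs Q) :
    (∀ ρ : Matrix (Fin d) (Fin d) ℂ, IsDensity ρ →
        classFid (probAB P Q ρ) (probB Q ρ) ≥ qFid (measChannel P ρ) ρ) ∧
      QF P Q ≤
        1 - (sInf {x : ℝ | ∃ ρ, IsDensity ρ ∧ x = qFid (measChannel P ρ) ρ}) ^ 2 := by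
  have key (ρ : Matrix (Fin d) (Fin d) ℂ) (hρ : IsDensity ρ) :
      qFid (measChannel P ρ) ρ ≤ classFid (probAB P Q ρ) (probB Q ρ) :=
    qFid_le_classFid_probB hQ (measChannel_posSemidef hP.1 hρ.1) hρ.1
  exact ⟨key, sSup_one_sub_sq_le_one_sub_sInf_sq (exists_isDensity hd)
    (fun ρ => qFid_nonneg _ ρ) key⟩

end
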